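/- Let f : [-1/2,1/2] → ℝ be convex and define g : [0,1/2] → ℝ by g(0) = 0 and g(x) = (1/(2x)) ∫_{-x}^{x} (f(t) − f(0)) dt for 0 < x ≤ 1/2. Then g is convex on [0,1/2]. -/

import Mathlib

/-!
Put `f_s t = (f t + f (-t)) / 2 - f 0`; it is convex on `[-1/2, 1/2]`, and folding the integral
over `[-x, x]` onto `[0, x]` and substituting `t ↦ t x` gives `g x = ∫₀¹ f_s (t x) dt` on
`[0, 1/2]`. Each `x ↦ f_s (t x)` with `0 ≤ t ≤ 1` is convex, and an integral of convex functions is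
convex. All integrals exist because a convex function on a compact interval is bounded and
continuous in its interior.
-/

open MeasureTheory Set

theorem ConvexOn.exists_abs_le_of_Icc {f : ℝ → ℝ} {a b : ℝ} (hf : ConvexOn ℝ (Icc a b) f) :
    ∃ C, ∀ x ∈ Icc a b, |f x| ≤ C := by
  set M := max (f a) (f b)
  refine ⟨max M (M - 2 * f ((a + b) / 2)), fun x hx => ?_⟩
  have hab : a ≤ b := hx.1.trans hx.2
  have hbound : ∀ y ∈ Icc a b, f y ≤ M := fun y hy =>
    hf.le_max_of_mem_Icc (left_mem_Icc.2 hab) (right_mem_Icc.2 hab) hy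
  have hreflect : a + b - x ∈ Icc a b := ⟨by linarith [hx.2], by linarith [hx.1]⟩
  have hmid : f ((a + b) / 2) ≤ (f x + f (a + b - x)) / 2 := by
    have h := hf.2 hx hreflect (by norm_num : (0:ℝ) ≤ 1 / 2) (by norm_num : (0:ℝ) ≤ 1 / 2)
      (by norm_num)
    simp only [smul_eq_mul] at h
    rw [show 1 / 2 * x + 1 / 2 * (a + b - x) = (a + b) / 2 by ring] at h
    linarith
  rw [abs_le]
  constructor
  · linarith [hbound _ hreflect, le_max_right M (M - 2 * f ((a + b) / 2))]
  · exact (hbound x hx).trans (le_max_left _ _)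

theorem ConvexOn.intervalIntegrable {f : ℝ → ℝ} {a b : ℝ} (hab : a ≤ b)
    (hf : ConvexOn ℝ (Icc a b) f) : IntervalIntegrable f volume a b := by
  obtain ⟨C, hC⟩ := hf.exists_abs_le_of_Icc
  have hcont : ContinuousOn f (Ioo a b) := by
    simpa only [interior_Icc] using hf.continuousOn_interior
  rw [intervalIntegrable_iff_integrableOn_Ioo_of_le hab]
  refine ⟨hcont.aestronglyMeasurable measurableSet_Ioo,
    .restrict_of_bounded (C := C) measure_Ioo_lt_top ?_⟩
  exact ae_restrict_of_forall_mem measurableSet_Ioo fun x hx => hC x (Ioo_subset_Icc_self hx)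

theorem convexOn_intervalIntegral {E : Type*} [AddCommGroup E] [Module ℝ E] {s : Set E}
    {F : ℝ → E → ℝ} {a b : ℝ} (hab : a ≤ b) (hs : Convex ℝ s)
    (hF : ∀ t ∈ Icc a b, ConvexOn ℝ s (F t))
    (hint : ∀ x ∈ s, IntervalIntegrable (fun t => F t x) volume a b) :
    ConvexOn ℝ s fun x => ∫ t in a..b, F t x := by
  refine ⟨hs, fun x hx y hy p q hp hq hpq => ?_⟩
  simp only [smul_eq_mul]
  calc ∫ t in a..b, F t (p • x + q • y)
      ≤ ∫ t in a..b, (p * F t x + q * F t y) :=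
        intervalIntegral.integral_mono_on hab (hint _ (hs hx hy hp hq hpq))
          (((hint x hx).const_mul p).add ((hint y hy).const_mul q))
          fun t ht => (hF t ht).2 hx hy hp hq hpq
    _ = (p * ∫ t in a..b, F t x) + q * ∫ t in a..b, F t y := by
      rw [intervalIntegral.integral_add ((hint x hx).const_mul p) ((hint y hy).const_mul q),
        intervalIntegral.integral_const_mul, intervalIntegral.integral_const_mul]

theorem ConvexOn.convexOn_integral_comp_mul {φ : ℝ → ℝ} {r : ℝ} (hφ : ConvexOn ℝ (Icc 0 r) φ) :
    ConvexOn ℝ (Icc 0 r) fun x => ∫ t in (0:ℝ)..1, φ (t * x) := by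
  have hmem : ∀ t ∈ Icc (0:ℝ) 1, ∀ x ∈ Icc 0 r, t * x ∈ Icc 0 r := fun t ht x hx =>
    ⟨mul_nonneg ht.1 hx.1, by nlinarith [ht.1, ht.2, hx.1, hx.2]⟩
  refine convexOn_intervalIntegral zero_le_one (convex_Icc 0 r)
    (fun t ht => (hφ.comp_linearMap (LinearMap.mulLeft ℝ t)).subset (hmem t ht) (convex_Icc 0 r))
    fun x hx => ?_
  exact ((hφ.comp_linearMap (LinearMap.mulRight ℝ x)).subset (fun t ht => hmem t ht x hx)
    (convex_Icc 0 1)).intervalIntegrable zero_le_one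

noncomputable def centeredEvenPart (f : ℝ → ℝ) (s : ℝ) : ℝ := (f s + f (-s)) / 2 - f 0

theorem ConvexOn.centeredEvenPart {f : ℝ → ℝ} {r : ℝ} (hf : ConvexOn ℝ (Icc (-r) r) f) :
    ConvexOn ℝ (Icc (-r) r) (centeredEvenPart f) := by
  have hsymm : (-LinearMap.id : ℝ →ₗ[ℝ] ℝ) ⁻¹' Icc (-r) r = Icc (-r) r := by
    ext s
    simp [neg_le, and_comm]
  have hneg : ConvexOn ℝ (Icc (-r) r) fun s => f (-s) := by
    have h := hf.comp_linearMap (-LinearMap.id)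
    rwa [hsymm] at h
  refine (((hf.add hneg).smul (by norm_num : (0:ℝ) ≤ 1 / 2)).add_const (-f 0)).congr
    fun s _ => ?_
  simp only [_root_.centeredEvenPart, Pi.add_apply, smul_eq_mul]
  ring

theorem intervalIntegral.integral_neg_self_eq_integral_add_comp_neg {f : ℝ → ℝ} {x : ℝ}
    (h₁ : IntervalIntegrable f volume (-x) 0) (h₂ : IntervalIntegrable f volume 0 x) :
    ∫ t in (-x)..x, f t = ∫ t in (0:ℝ)..x, (f t + f (-t)) := by
  have h₁' : IntervalIntegrable (fun t => f (-t)) volume 0 x := by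
    simpa using ((IntervalIntegrable.iff_comp_neg).mp h₁).symm
  rw [← integral_add_adjacent_intervals h₁ h₂, integral_add h₂ h₁', integral_comp_neg]
  simp only [neg_zero]
  ring

theorem average_sub_eq_integral_centeredEvenPart {f : ℝ → ℝ} {r x : ℝ}
    (hf : ConvexOn ℝ (Icc (-r) r) f) (hx : 0 < x) (hxr : x ≤ r) :
    (1 / (2 * x)) * ∫ t in (-x)..x, (f t - f 0) = ∫ t in (0:ℝ)..1, centeredEvenPart f (t * x) := by
  have hint : ∀ a b, -r ≤ a → a ≤ b → b ≤ r → IntervalIntegrable (fun t => f t - f 0) volume a b :=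
    fun a b ha hab hb => ((hf.subset (Icc_subset_Icc ha hb) (convex_Icc a b)).intervalIntegrable
      hab).sub intervalIntegrable_const
  have heven : (fun t => f t - f 0 + (f (-t) - f 0)) = fun t => 2 * centeredEvenPart f t := by
    funext t
    simp only [centeredEvenPart]
    ring
  rw [intervalIntegral.integral_neg_self_eq_integral_add_comp_neg
      (hint _ _ (by linarith) (by linarith) (by linarith)) (hint _ _ (by linarith) hx.le hxr),
    intervalIntegral.integral_comp_mul_right _ hx.ne', heven, intervalIntegral.integral_const_mul]
  simp only [zero_mul, one_mul, smul_eq_mul]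
  field_simp

/-- Key step in the proof of Lemma 1 of Cai, Low and Xia (2013): if `f` is convex on
`[-1/2, 1/2]` then the averaged function `g` with `g 0 = 0` and
`g x = (1/(2x)) * ∫_{-x}^{x} (f t - f 0) dt` for `0 < x ≤ 1/2` is convex on `[0, 1/2]`. -/
theorem averaged_convex_is_convex
    (f g : ℝ → ℝ) (hf : ConvexOn ℝ (Set.Icc (-(1:ℝ)/2) (1/2)) f)
    (hg0 : g 0 = 0)
    (hg : ∀ x : ℝ, 0 < x → x ≤ 1/2 → g x = (1/(2*x)) * ∫ t in (-x)..x, (f t - f 0)) :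
    ConvexOn ℝ (Set.Icc (0:ℝ) (1/2)) g := by
  rw [neg_div] at hf
  have hφ : ConvexOn ℝ (Icc 0 (1 / 2)) (centeredEvenPart f) :=
    hf.centeredEvenPart.subset (Icc_subset_Icc (by norm_num) le_rfl) (convex_Icc _ _)
  refine hφ.convexOn_integral_comp_mul.congr fun x hx => ?_
  rcases hx.1.eq_or_lt with rfl | hpos
  · simp [hg0, centeredEvenPart]
  · rw [hg x hpos hx.2, average_sub_eq_integral_centeredEvenPart hf hpos hx.2]
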